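/- Let V be a finite set, b ∈ (0,1], p, y : V → [0,1] with x_e = p_e·y_e, and w : V → ℝ_{≥0}. Let I and J be independent random subsets of V, where each e ∈ V lies in I independently with probability b·y_e, and each e ∈ V lies in J independently with probability p_e. Let π_out, π_in : 2^V → 2^V be maps with π_out(A) ⊆ A and π_in(A) ⊆ A for all A ⊆ V, and let c_out, c_in ∈ [0,1]. Assume: (i) for every e ∈ V with b·y_e > 0, Pr[e ∈ π_out(I) | e ∈ I] ≥ c_out; (ii) if R is a random subset of V containing each e independently with probability b·x_e, then for every e with b·x_e > 0, Pr[e ∈ π_in(R) | e ∈ R] ≥ c_in; (iii) π_in is monotone: for all e ∈ A₁ ⊆ A₂ ⊆ V, if e ∈ π_in(A₂) then e ∈ π_in(A₁). Then E[ Σ_{e ∈ π_in(π_out(I) ∩ J)} w_e ] ≥ b·(c_out + c_in − 1)·Σ_{e ∈ V} w_e·x_e. -/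
import Mathlib


open Finset

/-- The probability mass of the outcome `ι` in the product of independent
Bernoulli distributions where coordinate `e` equals `true` with probability `p e`. -/
noncomputable def prodWeight {V : Type*} [Fintype V] (p : V → ℝ) (ι : V → Bool) : ℝ :=
  ∏ e, (if ι e then p e else 1 - p e)

/-- The subset of `V` encoded by the Boolean outcome `ι`. -/
def outcomeSet {V : Type*} [Fintype V] (ι : V → Bool) : Finset V :=
  univ.filter (fun e => ι e = true)

lemma sum_pi {V : Type*} [Fintype V] [DecidableEq V] {α : Type*} [Fintype α] [DecidableEq α]
    (H : V → α → ℝ) :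
    ∑ h : V → α, ∏ f, H f (h f) = ∏ f, ∑ a, H f a := by
  have := Finset.prod_univ_sum (fun _ : V => (univ : Finset α)) H
  simpa [Fintype.piFinset_univ] using this.symm

lemma prodWeight_nonneg {V : Type*} [Fintype V] (p : V → ℝ) (hp0 : ∀ e, 0 ≤ p e)
    (hp1 : ∀ e, p e ≤ 1) (ι : V → Bool) : 0 ≤ prodWeight p ι := by
  apply Finset.prod_nonneg
  intro e _
  split <;> [exact hp0 e; linarith [hp1 e]]

lemma marg {V : Type*} [Fintype V] [DecidableEq V] (p : V → ℝ) (e : V)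
    (g : Bool → ℝ) :
    ∑ ω : V → Bool, prodWeight p ω * g (ω e) = p e * g true + (1 - p e) * g false := by
  have h : ∀ ω : V → Bool, prodWeight p ω * g (ω e)
      = ∏ f, (fun f s => (if s then p f else 1 - p f) * (if f = e then g s else 1)) f (ω f) := by
    intro ω
    rw [Finset.prod_mul_distrib]
    unfold prodWeight
    rw [Finset.prod_ite_eq' univ e (fun f => g (ω f))]
    simp
  rw [Finset.sum_congr rfl (fun ω _ => h ω),
    sum_pi (fun f s => (if s then p f else 1 - p f) * (if f = e then g s else 1))]
  rw [Finset.prod_eq_single e]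
  · simp [Fintype.sum_bool]
  · intro f _ hf
    simp [hf, Fintype.sum_bool]
  · simp

lemma convolve {V : Type*} [Fintype V] [DecidableEq V] (q r : V → ℝ) (g : (V → Bool) → ℝ) :
    ∑ ι : V → Bool, ∑ ω : V → Bool, prodWeight q ι * prodWeight r ω * g (fun f => ι f && ω f)
    = ∑ ρ : V → Bool, prodWeight (fun f => q f * r f) ρ * g ρ := by
  have step1 : ∀ ι ω : V → Bool, prodWeight q ι * prodWeight r ω * g (fun f => ι f && ω f)
      = ∑ ρ : V → Bool, (if ∀ f, (ι f && ω f) = ρ f then prodWeight q ι * prodWeight r ω else 0) * g ρ := by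
    intro ι ω
    rw [Finset.sum_eq_single (fun f => ι f && ω f)]
    · simp
    · intro ρ _ hρ
      rw [if_neg, zero_mul]
      intro hall
      exact hρ (funext fun f => (hall f).symm)
    · simp
  calc ∑ ι : V → Bool, ∑ ω : V → Bool, prodWeight q ι * prodWeight r ω * g (fun f => ι f && ω f)
      = ∑ ι : V → Bool, ∑ ω : V → Bool, ∑ ρ : V → Bool,
          (if ∀ f, (ι f && ω f) = ρ f then prodWeight q ι * prodWeight r ω else 0) * g ρ := by
        exact Finset.sum_congr rfl fun ι _ => Finset.sum_congr rfl fun ω _ => step1 ι ω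
    _ = ∑ ρ : V → Bool, (∑ ι : V → Bool, ∑ ω : V → Bool,
          (if ∀ f, (ι f && ω f) = ρ f then prodWeight q ι * prodWeight r ω else 0)) * g ρ := by
        rw [Finset.sum_congr rfl fun ι (_ : ι ∈ univ) =>
          (Finset.sum_comm (s := univ) (t := univ)
            (f := fun ω ρ => (if ∀ f, (ι f && ω f) = ρ f
              then prodWeight q ι * prodWeight r ω else 0) * g ρ)), Finset.sum_comm]
        simp [Finset.sum_mul]
    _ = ∑ ρ : V → Bool, prodWeight (fun f => q f * r f) ρ * g ρ := by
        refine Finset.sum_congr rfl fun ρ _ => ?_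
        congr 1
        have hterm : ∀ ι ω : V → Bool,
            (if ∀ f, (ι f && ω f) = ρ f then prodWeight q ι * prodWeight r ω else 0)
            = ∏ f, ((if ι f then q f else 1 - q f) * (if ω f then r f else 1 - r f) *
                (if (ι f && ω f) = ρ f then (1:ℝ) else 0)) := by
          intro ι ω
          by_cases hall : ∀ f, (ι f && ω f) = ρ f
          · rw [if_pos hall]
            have h1 : ∀ f, (if (ι f && ω f) = ρ f then (1:ℝ) else 0) = 1 :=
              fun f => if_pos (hall f)
            simp only [h1, mul_one]
            unfold prodWeight
            rw [Finset.prod_mul_distrib]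
          · rw [if_neg hall]
            push_neg at hall
            obtain ⟨f, hf⟩ := hall
            rw [eq_comm]
            apply Finset.prod_eq_zero (Finset.mem_univ f)
            rw [if_neg hf, mul_zero]
        calc ∑ ι : V → Bool, ∑ ω : V → Bool,
              (if ∀ f, (ι f && ω f) = ρ f then prodWeight q ι * prodWeight r ω else 0)
            = ∑ ι : V → Bool, ∑ ω : V → Bool,
              ∏ f, ((if ι f then q f else 1 - q f) * (if ω f then r f else 1 - r f) *
                (if (ι f && ω f) = ρ f then (1:ℝ) else 0)) :=
              Finset.sum_congr rfl fun ι _ => Finset.sum_congr rfl fun ω _ => hterm ι ω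
          _ = ∑ ι : V → Bool, ∏ f, ∑ t : Bool,
              ((if ι f then q f else 1 - q f) * (if t then r f else 1 - r f) *
                (if (ι f && t) = ρ f then (1:ℝ) else 0)) :=
              Finset.sum_congr rfl fun ι _ =>
                sum_pi (fun f t => (if ι f then q f else 1 - q f) * (if t then r f else 1 - r f) *
                  (if (ι f && t) = ρ f then (1:ℝ) else 0))
          _ = ∏ f, ∑ s : Bool, ∑ t : Bool,
              ((if s then q f else 1 - q f) * (if t then r f else 1 - r f) *
                (if (s && t) = ρ f then (1:ℝ) else 0)) :=
              sum_pi (fun f s => ∑ t : Bool,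
                ((if s then q f else 1 - q f) * (if t then r f else 1 - r f) *
                  (if (s && t) = ρ f then (1:ℝ) else 0)))
          _ = prodWeight (fun f => q f * r f) ρ := by
              unfold prodWeight
              refine Finset.prod_congr rfl fun f _ => ?_
              cases hρ : ρ f <;> simp [Fintype.sum_bool, hρ] <;> ring

lemma outcomeSet_inter {V : Type*} [Fintype V] [DecidableEq V] (ι ω : V → Bool) :
    outcomeSet ι ∩ outcomeSet ω = outcomeSet (fun f => ι f && ω f) := by
  ext f; simp [outcomeSet, Bool.and_eq_true]

lemma ind_ineq (A B C D E : Prop) [Decidable A] [Decidable B] [Decidable C] [Decidable D]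
    [Decidable E] (h1 : A → E) (h2 : C → E ∧ B) (h3 : A → B → C → D) :
    (if A then (1:ℝ) else 0) * (if B then 1 else 0) + (if C then 1 else 0)
      - (if E then 1 else 0) * (if B then 1 else 0) ≤ (if D then 1 else 0) := by
  split_ifs <;> norm_num <;> tauto

/-- Rounding guarantee for weighted stochastic probing: sampling `I` with marginals
`b·y`, applying the `(b, c_out)` outer CR-scheme, intersecting with the active set `J`
(marginals `p`), and applying the monotone `(b, c_in)` inner CR-scheme for `x = p·y`
yields expected weight at least `b·(c_out + c_in − 1)·Σ_e w e · x e`. -/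
theorem crScheme_weighted_rounding {V : Type*} [Fintype V] [DecidableEq V]
    (b : ℝ) (hb0 : 0 < b) (hb1 : b ≤ 1)
    (p y : V → ℝ) (hp0 : ∀ e, 0 ≤ p e) (hp1 : ∀ e, p e ≤ 1)
    (hy0 : ∀ e, 0 ≤ y e) (hy1 : ∀ e, y e ≤ 1)
    (x : V → ℝ) (hx : ∀ e, x e = p e * y e)
    (w : V → ℝ) (hw : ∀ e, 0 ≤ w e)
    (πout πin : Finset V → Finset V)
    (hπout : ∀ A, πout A ⊆ A) (hπin : ∀ A, πin A ⊆ A)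
    (cout cin : ℝ) (hcout0 : 0 ≤ cout) (hcout1 : cout ≤ 1)
    (hcin0 : 0 ≤ cin) (hcin1 : cin ≤ 1)
    -- (i) π_out is a (b, c_out) CR-scheme for y
    (hCRout : ∀ e : V, 0 < b * y e →
      (∑ ι : V → Bool, prodWeight (fun f => b * y f) ι *
        (if e ∈ πout (outcomeSet ι) then (1 : ℝ) else 0))
      ≥ cout * (b * y e))
    -- (ii) π_in is a (b, c_in) CR-scheme for x
    (hCRin : ∀ e : V, 0 < b * x e →
      (∑ ρ : V → Bool, prodWeight (fun f => b * x f) ρ *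
        (if e ∈ πin (outcomeSet ρ) then (1 : ℝ) else 0))
      ≥ cin * (b * x e))
    -- (iii) π_in is monotone
    (hmono : ∀ (A₁ A₂ : Finset V) (e : V), e ∈ A₁ → A₁ ⊆ A₂ → e ∈ πin A₂ → e ∈ πin A₁) :
    (∑ ι : V → Bool, ∑ ω : V → Bool,
        prodWeight (fun f => b * y f) ι * prodWeight p ω *
          ∑ e ∈ πin (πout (outcomeSet ι) ∩ outcomeSet ω), w e)
      ≥ b * (cout + cin - 1) * ∑ e : V, w e * x e := by
  have hby0 : ∀ f, 0 ≤ b * y f := fun f => mul_nonneg hb0.le (hy0 f)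
  have hby1 : ∀ f, b * y f ≤ 1 := fun f => by nlinarith [hy0 f, hy1 f]
  have hwq : ∀ ι, 0 ≤ prodWeight (fun f => b * y f) ι :=
    prodWeight_nonneg _ hby0 hby1
  have hwp : ∀ ω, 0 ≤ prodWeight p ω := prodWeight_nonneg p hp0 hp1
  -- rewrite LHS: swap sums to per-element form
  have hLHS : (∑ ι : V → Bool, ∑ ω : V → Bool,
        prodWeight (fun f => b * y f) ι * prodWeight p ω *
          ∑ e ∈ πin (πout (outcomeSet ι) ∩ outcomeSet ω), w e)
      = ∑ e : V, ∑ ι : V → Bool, ∑ ω : V → Bool,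
          prodWeight (fun f => b * y f) ι * prodWeight p ω *
            (if e ∈ πin (πout (outcomeSet ι) ∩ outcomeSet ω) then w e else 0) := by
    calc (∑ ι : V → Bool, ∑ ω : V → Bool,
        prodWeight (fun f => b * y f) ι * prodWeight p ω *
          ∑ e ∈ πin (πout (outcomeSet ι) ∩ outcomeSet ω), w e)
        = ∑ ι : V → Bool, ∑ ω : V → Bool, ∑ e : V,
            prodWeight (fun f => b * y f) ι * prodWeight p ω *
              (if e ∈ πin (πout (outcomeSet ι) ∩ outcomeSet ω) then w e else 0) := by
          refine Finset.sum_congr rfl fun ι _ => Finset.sum_congr rfl fun ω _ => ?_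
          have h0 : ∑ e ∈ πin (πout (outcomeSet ι) ∩ outcomeSet ω), w e
              = ∑ e : V, (if e ∈ πin (πout (outcomeSet ι) ∩ outcomeSet ω) then w e else 0) := by
            rw [Finset.sum_ite_mem, Finset.univ_inter]
          rw [h0, Finset.mul_sum]
      _ = ∑ ι : V → Bool, ∑ e : V, ∑ ω : V → Bool,
            prodWeight (fun f => b * y f) ι * prodWeight p ω *
              (if e ∈ πin (πout (outcomeSet ι) ∩ outcomeSet ω) then w e else 0) :=
          Finset.sum_congr rfl fun ι _ => Finset.sum_comm
      _ = ∑ e : V, ∑ ι : V → Bool, ∑ ω : V → Bool,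
            prodWeight (fun f => b * y f) ι * prodWeight p ω *
              (if e ∈ πin (πout (outcomeSet ι) ∩ outcomeSet ω) then w e else 0) :=
          Finset.sum_comm
  rw [ge_iff_le, hLHS, Finset.mul_sum]
  apply Finset.sum_le_sum
  intro e _
  -- factor out w e
  have hfact : (∑ ι : V → Bool, ∑ ω : V → Bool,
      prodWeight (fun f => b * y f) ι * prodWeight p ω *
        (if e ∈ πin (πout (outcomeSet ι) ∩ outcomeSet ω) then w e else 0))
      = w e * ∑ ι : V → Bool, ∑ ω : V → Bool,
          prodWeight (fun f => b * y f) ι * prodWeight p ω *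
            (if e ∈ πin (πout (outcomeSet ι) ∩ outcomeSet ω) then (1:ℝ) else 0) := by
    rw [Finset.mul_sum]
    refine Finset.sum_congr rfl fun ι _ => ?_
    rw [Finset.mul_sum]
    refine Finset.sum_congr rfl fun ω _ => ?_
    split <;> ring
  rw [hfact]
  set P : ℝ := ∑ ι : V → Bool, ∑ ω : V → Bool,
      prodWeight (fun f => b * y f) ι * prodWeight p ω *
        (if e ∈ πin (πout (outcomeSet ι) ∩ outcomeSet ω) then (1:ℝ) else 0) with hPdef
  have hP0 : 0 ≤ P := by
    apply Finset.sum_nonneg; intro ι _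
    apply Finset.sum_nonneg; intro ω _
    have : (0:ℝ) ≤ (if e ∈ πin (πout (outcomeSet ι) ∩ outcomeSet ω) then (1:ℝ) else 0) := by
      split <;> norm_num
    exact mul_nonneg (mul_nonneg (hwq ι) (hwp ω)) this
  have hxe0 : 0 ≤ x e := by rw [hx e]; exact mul_nonneg (hp0 e) (hy0 e)
  have hPmain : 0 < b * x e → (cout + cin - 1) * (b * x e) ≤ P := by
    intro hbx
    have hxe : 0 < x e := by nlinarith
    have hye : 0 < b * y e := by
      have hy : 0 < y e := by
        nlinarith [hx e, mul_nonneg (sub_nonneg.mpr (hp1 e)) (hy0 e)]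
      exact mul_pos hb0 hy
    -- pointwise indicator inequality
    have hpt : ∀ ι ω : V → Bool,
        prodWeight (fun f => b * y f) ι * prodWeight p ω *
          ((if e ∈ πout (outcomeSet ι) then (1:ℝ) else 0) * (if ω e then (1:ℝ) else 0)
           + (if e ∈ πin (outcomeSet ι ∩ outcomeSet ω) then (1:ℝ) else 0)
           - (if ι e then (1:ℝ) else 0) * (if ω e then (1:ℝ) else 0))
        ≤ prodWeight (fun f => b * y f) ι * prodWeight p ω *
          (if e ∈ πin (πout (outcomeSet ι) ∩ outcomeSet ω) then (1:ℝ) else 0) := by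
      intro ι ω
      apply mul_le_mul_of_nonneg_left _ (mul_nonneg (hwq ι) (hwp ω))
      have h1 : e ∈ πout (outcomeSet ι) → ι e = true := fun h => by
        have := hπout _ h; simpa [outcomeSet] using this
      have h2 : e ∈ πin (outcomeSet ι ∩ outcomeSet ω) → ι e = true ∧ ω e = true := fun h => by
        have := hπin _ h
        rw [Finset.mem_inter] at this
        exact ⟨by simpa [outcomeSet] using this.1, by simpa [outcomeSet] using this.2⟩
      have h3 : e ∈ πout (outcomeSet ι) → ω e = true →
          e ∈ πin (outcomeSet ι ∩ outcomeSet ω) →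
          e ∈ πin (πout (outcomeSet ι) ∩ outcomeSet ω) := by
        intro ha hb hc
        refine hmono _ _ e (Finset.mem_inter.mpr ⟨ha, ?_⟩)
          (Finset.inter_subset_inter (hπout _) (Finset.Subset.refl _)) hc
        simp [outcomeSet, hb]
      exact ind_ineq _ _ _ _ _ h1 h2 h3
    have hsum : (∑ ι : V → Bool, ∑ ω : V → Bool,
        prodWeight (fun f => b * y f) ι * prodWeight p ω *
          ((if e ∈ πout (outcomeSet ι) then (1:ℝ) else 0) * (if ω e then (1:ℝ) else 0)
           + (if e ∈ πin (outcomeSet ι ∩ outcomeSet ω) then (1:ℝ) else 0)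
           - (if ι e then (1:ℝ) else 0) * (if ω e then (1:ℝ) else 0))) ≤ P :=
      Finset.sum_le_sum fun ι _ => Finset.sum_le_sum fun ω _ => hpt ι ω
    -- split the sum into three terms
    have hsplit : (∑ ι : V → Bool, ∑ ω : V → Bool,
        prodWeight (fun f => b * y f) ι * prodWeight p ω *
          ((if e ∈ πout (outcomeSet ι) then (1:ℝ) else 0) * (if ω e then (1:ℝ) else 0)
           + (if e ∈ πin (outcomeSet ι ∩ outcomeSet ω) then (1:ℝ) else 0)
           - (if ι e then (1:ℝ) else 0) * (if ω e then (1:ℝ) else 0)))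
        = (∑ ι : V → Bool, ∑ ω : V → Bool,
            prodWeight (fun f => b * y f) ι * prodWeight p ω *
              ((if e ∈ πout (outcomeSet ι) then (1:ℝ) else 0) * (if ω e then (1:ℝ) else 0)))
          + (∑ ι : V → Bool, ∑ ω : V → Bool,
            prodWeight (fun f => b * y f) ι * prodWeight p ω *
              (if e ∈ πin (outcomeSet ι ∩ outcomeSet ω) then (1:ℝ) else 0))
          - (∑ ι : V → Bool, ∑ ω : V → Bool,
            prodWeight (fun f => b * y f) ι * prodWeight p ω *
              ((if ι e then (1:ℝ) else 0) * (if ω e then (1:ℝ) else 0))) := by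
      simp only [mul_add, mul_sub, Finset.sum_add_distrib, Finset.sum_sub_distrib]
    -- marginal computations
    have hmargp : (∑ ω : V → Bool, prodWeight p ω * (if ω e then (1:ℝ) else 0)) = p e := by
      have := marg p e (fun s => if s then (1:ℝ) else 0)
      simpa using this
    have hmargy : (∑ ι : V → Bool,
        prodWeight (fun f => b * y f) ι * (if ι e then (1:ℝ) else 0)) = b * y e := by
      have := marg (fun f => b * y f) e (fun s => if s then (1:ℝ) else 0)
      simpa using this
    -- Term 1
    have hT1 : (∑ ι : V → Bool, ∑ ω : V → Bool,
        prodWeight (fun f => b * y f) ι * prodWeight p ω *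
          ((if e ∈ πout (outcomeSet ι) then (1:ℝ) else 0) * (if ω e then (1:ℝ) else 0)))
        = (∑ ι : V → Bool, prodWeight (fun f => b * y f) ι *
            (if e ∈ πout (outcomeSet ι) then (1:ℝ) else 0)) * p e := by
      rw [Finset.sum_mul]
      refine Finset.sum_congr rfl fun ι _ => ?_
      rw [← hmargp, Finset.mul_sum]
      exact Finset.sum_congr rfl fun ω _ => by ring
    have hT1ge : (∑ ι : V → Bool, prodWeight (fun f => b * y f) ι *
            (if e ∈ πout (outcomeSet ι) then (1:ℝ) else 0)) * p e
        ≥ cout * (b * x e) := by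
      have h := mul_le_mul_of_nonneg_right (hCRout e hye) (hp0 e)
      have heq : cout * (b * y e) * p e = cout * (b * x e) := by rw [hx e]; ring
      linarith [heq ▸ h]
    -- Term 3
    have hT3 : (∑ ι : V → Bool, ∑ ω : V → Bool,
        prodWeight (fun f => b * y f) ι * prodWeight p ω *
          ((if ι e then (1:ℝ) else 0) * (if ω e then (1:ℝ) else 0)))
        = b * x e := by
      have h : (∑ ι : V → Bool, ∑ ω : V → Bool,
          prodWeight (fun f => b * y f) ι * prodWeight p ω *
            ((if ι e then (1:ℝ) else 0) * (if ω e then (1:ℝ) else 0)))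
          = (∑ ι : V → Bool, prodWeight (fun f => b * y f) ι *
              (if ι e then (1:ℝ) else 0)) * p e := by
        rw [Finset.sum_mul]
        refine Finset.sum_congr rfl fun ι _ => ?_
        rw [← hmargp, Finset.mul_sum]
        exact Finset.sum_congr rfl fun ω _ => by ring
      rw [h, hmargy, hx e]; ring
    -- Term 2
    have hT2 : (∑ ι : V → Bool, ∑ ω : V → Bool,
        prodWeight (fun f => b * y f) ι * prodWeight p ω *
          (if e ∈ πin (outcomeSet ι ∩ outcomeSet ω) then (1:ℝ) else 0))
        = ∑ ρ : V → Bool, prodWeight (fun f => b * x f) ρ *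
            (if e ∈ πin (outcomeSet ρ) then (1:ℝ) else 0) := by
      have hconv := convolve (fun f => b * y f) p
        (fun ρ => if e ∈ πin (outcomeSet ρ) then (1:ℝ) else 0)
      have hfun : (fun f => (b * y f) * p f) = (fun f => b * x f) :=
        funext fun f => by rw [hx f]; ring
      rw [← hfun]
      rw [← hconv]
      refine Finset.sum_congr rfl fun ι _ => Finset.sum_congr rfl fun ω _ => ?_
      rw [outcomeSet_inter]
    have hT2ge : (∑ ι : V → Bool, ∑ ω : V → Bool,
        prodWeight (fun f => b * y f) ι * prodWeight p ω *
          (if e ∈ πin (outcomeSet ι ∩ outcomeSet ω) then (1:ℝ) else 0))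
        ≥ cin * (b * x e) := by
      rw [hT2]; exact hCRin e hbx
    rw [hsplit] at hsum
    rw [hT1, hT3] at hsum
    linarith
  rcases eq_or_lt_of_le hxe0 with hxe | hxe
  · have : b * (cout + cin - 1) * (w e * x e) = 0 := by rw [← hxe]; ring
    rw [this]
    exact mul_nonneg (hw e) hP0
  · have hbx : 0 < b * x e := mul_pos hb0 hxe
    have h := mul_le_mul_of_nonneg_left (hPmain hbx) (hw e)
    have heq : b * (cout + cin - 1) * (w e * x e)
        = w e * ((cout + cin - 1) * (b * x e)) := by ring
    rw [heq]
    exact h
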